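/- arXiv:0806.0349 — 5 statements merged into one kernel-verified Lean document; each statement's English description precedes it below -/
import Mathlib

section
/- For all p, q in the closed forward light cone V_+, every point of −W_0 − Q_κ q is spacelike or lightlike separated from every point of W_0 + Q_κ p. -/
/-- Minkowski inner product on ℝ^d. -/
noncomputable def Mink (d : ℕ) (x y : Fin (d + 2) → ℝ) : ℝ :=
  x 0 * y 0 - ∑ i ∈ Finset.univ.erase (0 : Fin (d + 2)), x i * y i

/-- The closed forward light cone `V₊`. -/
noncomputable def Vplus (d : ℕ) : Set (Fin (d + 2) → ℝ) :=
  {p | Real.sqrt (∑ i ∈ Finset.univ.erase (0 : Fin (d + 2)), (p i) ^ 2) ≤ p 0}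

/-- The standard wedge `W₀ = {x : x 1 ≥ |x 0|}`. -/
def W0 (d : ℕ) : Set (Fin (d + 2) → ℝ) := {x | |x 0| ≤ x 1}

/-- The matrix `Q_κ`. -/
def Qk (d : ℕ) (κ : ℝ) (x : Fin (d + 2) → ℝ) : Fin (d + 2) → ℝ :=
  fun i => if i = 0 then κ * x 1 else if i = 1 then κ * x 0 else 0

/-
The closed wedge `W₀ = {v : |v 0| ≤ v 1}` is a convex cone, `Q_κ` maps `V₊` into it, and
`y ∈ −W₀` means `−y ∈ W₀`. Hence the separation vector `x + Q_κ p − (y − Q_κ q) = x + Q_κ p + (−y) + Q_κ q`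
lies in `W₀`, and every vector of `W₀` satisfies `v₀² ≤ v₁² ≤ |v⃗|²`, i.e. is spacelike or lightlike.
-/

lemma sq_le_sum_sq_erase_zero {d : ℕ} (v : Fin (d + 2) → ℝ) {i : Fin (d + 2)} (hi : i ≠ 0) :
    v i ^ 2 ≤ ∑ j ∈ Finset.univ.erase (0 : Fin (d + 2)), v j ^ 2 :=
  Finset.single_le_sum (f := fun j => v j ^ 2) (fun _ _ => sq_nonneg _)
    (Finset.mem_erase.mpr ⟨hi, Finset.mem_univ _⟩)

lemma Mink_self (d : ℕ) (v : Fin (d + 2) → ℝ) :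
    Mink d v v = v 0 ^ 2 - ∑ i ∈ Finset.univ.erase (0 : Fin (d + 2)), v i ^ 2 := by
  simp only [Mink, sq]

lemma Mink_self_nonpos_of_abs_le {d : ℕ} {v : Fin (d + 2) → ℝ} {i : Fin (d + 2)} (hi : i ≠ 0)
    (h : |v 0| ≤ |v i|) : Mink d v v ≤ 0 := by
  rw [Mink_self, sub_nonpos]
  exact (sq_le_sq.mpr h).trans (sq_le_sum_sq_erase_zero v hi)

lemma Vplus.abs_le {d : ℕ} {p : Fin (d + 2) → ℝ} (hp : p ∈ Vplus d) {i : Fin (d + 2)}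
    (hi : i ≠ 0) : |p i| ≤ p 0 :=
  calc |p i| = Real.sqrt (p i ^ 2) := (Real.sqrt_sq_eq_abs _).symm
    _ ≤ Real.sqrt (∑ j ∈ Finset.univ.erase (0 : Fin (d + 2)), p j ^ 2) :=
        Real.sqrt_le_sqrt (sq_le_sum_sq_erase_zero p hi)
    _ ≤ p 0 := hp

namespace W0

variable {d : ℕ} {v w : Fin (d + 2) → ℝ}

lemma add_mem (hv : v ∈ W0 d) (hw : w ∈ W0 d) : v + w ∈ W0 d :=
  show |v 0 + w 0| ≤ v 1 + w 1 from (abs_add_le _ _).trans (add_le_add hv hw)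

lemma neg_mem_iff : -v ∈ W0 d ↔ |v 0| ≤ -v 1 := by
  show |-v 0| ≤ -v 1 ↔ _
  rw [abs_neg]

lemma Qk_mem {κ : ℝ} (hκ : 0 ≤ κ) {p : Fin (d + 2) → ℝ} (hp : p ∈ Vplus d) : Qk d κ p ∈ W0 d := by
  show |Qk d κ p 0| ≤ Qk d κ p 1
  simp only [Qk, if_pos, one_ne_zero, if_false, abs_mul, abs_of_nonneg hκ]
  exact mul_le_mul_of_nonneg_left (Vplus.abs_le hp one_ne_zero) hκ

end W0

/-- For `p, q ∈ V₊`, every point of `−W₀ − Q_κ q` is spacelike or lightlike separated from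
every point of `W₀ + Q_κ p`. -/
theorem shifted_wedges_spacelike (d : ℕ) (κ : ℝ) (hκ : 0 < κ)
    (p q : Fin (d + 2) → ℝ) (hp : p ∈ Vplus d) (hq : q ∈ Vplus d)
    (x y : Fin (d + 2) → ℝ) (hx : x ∈ W0 d) (hy : |y 0| ≤ - y 1) :
    Mink d ((x + Qk d κ p) - (y - Qk d κ q)) ((x + Qk d κ p) - (y - Qk d κ q)) ≤ 0 := by
  have hmem : (x + Qk d κ p) - (y - Qk d κ q) ∈ W0 d := by
    rw [show (x + Qk d κ p) - (y - Qk d κ q) = x + Qk d κ p + (-y + Qk d κ q) by abel]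
    exact W0.add_mem (W0.add_mem hx (W0.Qk_mem hκ.le hp))
      (W0.add_mem (W0.neg_mem_iff.mpr hy) (W0.Qk_mem hκ.le hq))
  exact Mink_self_nonpos_of_abs_le one_ne_zero (hmem.trans (le_abs_self _))
end

section
/- Let H be a finite-dimensional complex inner product space, let (E_p)_{p ∈ S} be a finite family of pairwise orthogonal projections on H indexed by a finite set S ⊆ ℝ^d with Σ_p E_p = 1, and let U(x) = Σ_p e^{i⟨p,x⟩} E_p for x ∈ ℝ^d, where ⟨·,·⟩ is a (possibly indefinite) symmetric bilinear form on ℝ^d. Let Q be a linear map on ℝ^d skew-symmetric with respect to ⟨·,·⟩, i.e., ⟨q, Qp⟩ = −⟨p, Qq⟩ for all p, q. Then for every linear operator F on H, Σ_p (U(Qp) F U(Qp)^{-1}) E_p = Σ_p E_p (U(Qp) F U(Qp)^{-1}). -/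
open scoped ComplexConjugate

/-- The finite spectral unitary `U(x) = ∑_{p ∈ S} e^{i⟨p,x⟩} E_p`. -/
noncomputable def Uop {d : ℕ} {H : Type*} [NormedAddCommGroup H] [InnerProductSpace ℂ H]
    (S : Finset (Fin d → ℝ)) (E : (Fin d → ℝ) → (H →L[ℂ] H))
    (B : LinearMap.BilinForm ℝ (Fin d → ℝ)) (x : Fin d → ℝ) : H →L[ℂ] H :=
  ∑ p ∈ S, Complex.exp (Complex.I * (B p x : ℝ)) • E p

/-- The adjoint action `α_x(F) = U(x) F U(x)⁻¹` (note `U(x)⁻¹ = U(−x)`). -/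
noncomputable def adAct {d : ℕ} {H : Type*} [NormedAddCommGroup H] [InnerProductSpace ℂ H]
    (S : Finset (Fin d → ℝ)) (E : (Fin d → ℝ) → (H →L[ℂ] H))
    (B : LinearMap.BilinForm ℝ (Fin d → ℝ)) (x : Fin d → ℝ) (F : H →L[ℂ] H) : H →L[ℂ] H :=
  Uop S E B x * F * Uop S E B (-x)

/-- The warped convolution `F_Q = ∑_{p ∈ S} E_p α_{Qp}(F)`. -/
noncomputable def warp {d : ℕ} {H : Type*} [NormedAddCommGroup H] [InnerProductSpace ℂ H]
    (S : Finset (Fin d → ℝ)) (E : (Fin d → ℝ) → (H →L[ℂ] H))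
    (B : LinearMap.BilinForm ℝ (Fin d → ℝ))
    (Q : (Fin d → ℝ) →ₗ[ℝ] (Fin d → ℝ)) (F : H →L[ℂ] H) : H →L[ℂ] H :=
  ∑ p ∈ S, E p * adAct S E B (Q p) F

/-! Since `E_p U(x) = U(x) E_p = e^{i⟨p,x⟩} E_p`, both sides expand to
`∑_{p,q} e^{i⟨q,Qp⟩} E_q F E_p`. Skewness gives `⟨p,Qp⟩ = 0`, so the outer factor `U(∓Qp)`
next to `E_p` drops out, and it turns the phase `e^{i⟨q,-Qp⟩}` of the right-hand side into
`e^{i⟨p,Qq⟩}`. -/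

section OrthogonalIdempotents

variable {ι R A : Type*} [Semiring R] [Semiring A] [Module R A]
  {S : Finset ι} {E : ι → A} {p : ι}

theorem sum_smul_mul_of_orthogonal [IsScalarTower R A A]
    (hidem : ∀ p ∈ S, E p * E p = E p) (horth : ∀ p ∈ S, ∀ q ∈ S, p ≠ q → E p * E q = 0)
    (c : ι → R) (hp : p ∈ S) :
    (∑ q ∈ S, c q • E q) * E p = c p • E p := by
  rw [Finset.sum_mul, Finset.sum_eq_single_of_mem p hp, smul_mul_assoc, hidem p hp]
  intro q hq hqp
  rw [smul_mul_assoc, horth q hq p hp hqp, smul_zero]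

theorem mul_sum_smul_of_orthogonal [SMulCommClass R A A]
    (hidem : ∀ p ∈ S, E p * E p = E p) (horth : ∀ p ∈ S, ∀ q ∈ S, p ≠ q → E p * E q = 0)
    (c : ι → R) (hp : p ∈ S) :
    E p * (∑ q ∈ S, c q • E q) = c p • E p := by
  rw [Finset.mul_sum, Finset.sum_eq_single_of_mem p hp, mul_smul_comm, hidem p hp]
  intro q hq hqp
  rw [mul_smul_comm, horth p hp q hq hqp.symm, smul_zero]

end OrthogonalIdempotents

theorem skew_apply_self_eq_zero {M : Type*} [AddCommGroup M] [Module ℝ M]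
    (B : LinearMap.BilinForm ℝ M) (Q : M →ₗ[ℝ] M)
    (hskew : ∀ p q, B q (Q p) = - B p (Q q)) (p : M) :
    B p (Q p) = 0 := by
  linarith [hskew p p]

section Warp

variable {d : ℕ} {H : Type*} [NormedAddCommGroup H] [InnerProductSpace ℂ H]
  {S : Finset (Fin d → ℝ)} {E : (Fin d → ℝ) → (H →L[ℂ] H)}
  {B : LinearMap.BilinForm ℝ (Fin d → ℝ)} {Q : (Fin d → ℝ) →ₗ[ℝ] (Fin d → ℝ)} {p : Fin d → ℝ}

theorem Uop_mul_eq_sum (x : Fin d → ℝ) (G : H →L[ℂ] H) :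
    Uop S E B x * G = ∑ q ∈ S, Complex.exp (Complex.I * (B q x : ℝ)) • (E q * G) := by
  simp only [Uop, Finset.sum_mul, smul_mul_assoc]

theorem mul_Uop_eq_sum (x : Fin d → ℝ) (G : H →L[ℂ] H) :
    G * Uop S E B x = ∑ q ∈ S, Complex.exp (Complex.I * (B q x : ℝ)) • (G * E q) := by
  simp only [Uop, Finset.mul_sum, mul_smul_comm]

variable (hidem : ∀ p ∈ S, E p * E p = E p)
  (horth : ∀ p ∈ S, ∀ q ∈ S, p ≠ q → E p * E q = 0)
  (hskew : ∀ p q, B q (Q p) = - B p (Q q))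
include hidem horth hskew

theorem adAct_mul_eq_sum (F : H →L[ℂ] H) (hp : p ∈ S) :
    adAct S E B (Q p) F * E p
      = ∑ q ∈ S, Complex.exp (Complex.I * (B q (Q p) : ℝ)) • (E q * F * E p) := by
  have hphase : Uop S E B (-Q p) * E p = E p := by
    rw [Uop, sum_smul_mul_of_orthogonal hidem horth _ hp, map_neg,
      skew_apply_self_eq_zero B Q hskew p]
    simp
  rw [adAct, mul_assoc, hphase, mul_assoc, Uop_mul_eq_sum]
  simp only [mul_assoc]

theorem mul_adAct_eq_sum (F : H →L[ℂ] H) (hp : p ∈ S) :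
    E p * adAct S E B (Q p) F
      = ∑ q ∈ S, Complex.exp (Complex.I * (B p (Q q) : ℝ)) • (E p * F * E q) := by
  have hphase : E p * Uop S E B (Q p) = E p := by
    rw [Uop, mul_sum_smul_of_orthogonal hidem horth _ hp, skew_apply_self_eq_zero B Q hskew p]
    simp
  rw [adAct, ← mul_assoc, ← mul_assoc, hphase, mul_Uop_eq_sum]
  refine Finset.sum_congr rfl fun q _ => ?_
  rw [map_neg, hskew p q, neg_neg]

end Warp

theorem warp_left_eq_right_general {d : ℕ} {H : Type*} [NormedAddCommGroup H]
    [InnerProductSpace ℂ H]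
    (S : Finset (Fin d → ℝ)) (E : (Fin d → ℝ) → (H →L[ℂ] H))
    (hproj : ∀ p ∈ S, E p * E p = E p)
    (horth : ∀ p ∈ S, ∀ q ∈ S, p ≠ q → E p * E q = 0)
    (B : LinearMap.BilinForm ℝ (Fin d → ℝ))
    (Q : (Fin d → ℝ) →ₗ[ℝ] (Fin d → ℝ))
    (hskew : ∀ p q, B q (Q p) = - B p (Q q))
    (F : H →L[ℂ] H) :
    ∑ p ∈ S, adAct S E B (Q p) F * E p = ∑ p ∈ S, E p * adAct S E B (Q p) F := by
  rw [Finset.sum_congr rfl fun p hp => adAct_mul_eq_sum hproj horth hskew F hp,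
    Finset.sum_congr rfl fun p hp => mul_adAct_eq_sum hproj horth hskew F hp, Finset.sum_comm]

/-- Lemma 2.1 (finite-dimensional): the left and right warped convolutions coincide:
`∑_p α_{Qp}(F) E_p = ∑_p E_p α_{Qp}(F)`. -/
theorem warp_left_eq_right {d : ℕ} {H : Type*} [NormedAddCommGroup H]
    [InnerProductSpace ℂ H] [FiniteDimensional ℂ H]
    (S : Finset (Fin d → ℝ)) (E : (Fin d → ℝ) → (H →L[ℂ] H))
    (hproj : ∀ p ∈ S, E p * E p = E p)
    (horth : ∀ p ∈ S, ∀ q ∈ S, p ≠ q → E p * E q = 0)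
    (hsum : ∑ p ∈ S, E p = 1)
    (B : LinearMap.BilinForm ℝ (Fin d → ℝ)) (hB : ∀ x y, B x y = B y x)
    (Q : (Fin d → ℝ) →ₗ[ℝ] (Fin d → ℝ))
    (hskew : ∀ p q, B q (Q p) = - B p (Q q))
    (F : H →L[ℂ] H) :
    ∑ p ∈ S, adAct S E B (Q p) F * E p = ∑ p ∈ S, E p * adAct S E B (Q p) F :=
  warp_left_eq_right_general S E hproj horth B Q hskew F
end

section
/- In the finite-dimensional setting, the warped convolution commutes with taking adjoints: (F_Q)* = (F*)_Q, where F_Q = Σ_p E_p U(Qp) F U(Qp)^{-1}. -/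
open scoped ComplexConjugate

/-!
Since the `E p` are self-adjoint, `U(x)* = U(-x)`, so `α_x` commutes with taking adjoints and
`(F_Q)* = ∑_p α_{Qp}(F*) E_p`. It remains to move `E_p` back to the left. Because `E_p` picks out
the eigenvalue `e^{i⟨p,x⟩}` of `U(x)` and `⟨p,Qp⟩ = 0`, one has `E_p α_{Qp}(G) = E_p G U(-Qp)` and
`α_{Qp}(G) E_p = U(Qp) G E_p`; expanding `U` turns both `∑_p E_p α_{Qp}(G)` and
`∑_p α_{Qp}(G) E_p` into double sums of phases times `E_p G E_q`, which agree by the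
skew-symmetry `⟨q,Qp⟩ = -⟨p,Qq⟩`.
-/

namespace Uop

variable {d : ℕ} {H : Type*} [NormedAddCommGroup H] [InnerProductSpace ℂ H]
  (S : Finset (Fin d → ℝ)) (E : (Fin d → ℝ) → (H →L[ℂ] H))
  (B : LinearMap.BilinForm ℝ (Fin d → ℝ))

theorem adjoint_eq_neg [CompleteSpace H]
    (hsa : ∀ p ∈ S, ContinuousLinearMap.adjoint (E p) = E p) (x : Fin d → ℝ) :
    ContinuousLinearMap.adjoint (Uop S E B x) = Uop S E B (-x) := by
  rw [Uop, Uop, map_sum]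
  refine Finset.sum_congr rfl fun p hp => ?_
  rw [map_smulₛₗ, hsa p hp, ← Complex.exp_conj, map_neg]
  simp

variable {S E}
variable (hproj : ∀ p ∈ S, E p * E p = E p)
  (horth : ∀ p ∈ S, ∀ q ∈ S, p ≠ q → E p * E q = 0)
include hproj horth

theorem proj_mul {p : Fin d → ℝ} (hp : p ∈ S) (x : Fin d → ℝ) :
    E p * Uop S E B x = Complex.exp (Complex.I * (B p x : ℝ)) • E p := by
  rw [Uop, Finset.mul_sum, Finset.sum_eq_single_of_mem p hp, mul_smul_comm, hproj p hp]
  intro q hq hqp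
  rw [mul_smul_comm, horth p hp q hq hqp.symm, smul_zero]

theorem mul_proj {p : Fin d → ℝ} (hp : p ∈ S) (x : Fin d → ℝ) :
    Uop S E B x * E p = Complex.exp (Complex.I * (B p x : ℝ)) • E p := by
  rw [Uop, Finset.sum_mul, Finset.sum_eq_single_of_mem p hp, smul_mul_assoc, hproj p hp]
  intro q hq hqp
  rw [smul_mul_assoc, horth q hq p hp hqp, smul_zero]

end Uop

namespace adAct

variable {d : ℕ} {H : Type*} [NormedAddCommGroup H] [InnerProductSpace ℂ H]
  {S : Finset (Fin d → ℝ)} {E : (Fin d → ℝ) → (H →L[ℂ] H)}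
  (B : LinearMap.BilinForm ℝ (Fin d → ℝ))

theorem map_adjoint [CompleteSpace H]
    (hsa : ∀ p ∈ S, ContinuousLinearMap.adjoint (E p) = E p) (x : Fin d → ℝ) (G : H →L[ℂ] H) :
    adAct S E B x (ContinuousLinearMap.adjoint G)
      = ContinuousLinearMap.adjoint (adAct S E B x G) := by
  simp only [adAct, ← ContinuousLinearMap.star_eq_adjoint, star_mul]
  simp only [ContinuousLinearMap.star_eq_adjoint, Uop.adjoint_eq_neg S E B hsa, neg_neg,
    mul_assoc]

variable (hproj : ∀ p ∈ S, E p * E p = E p)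
  (horth : ∀ p ∈ S, ∀ q ∈ S, p ≠ q → E p * E q = 0)
include hproj horth

theorem proj_mul {p : Fin d → ℝ} (hp : p ∈ S) (x : Fin d → ℝ) (G : H →L[ℂ] H) :
    E p * adAct S E B x G
      = Complex.exp (Complex.I * (B p x : ℝ)) • (E p * G * Uop S E B (-x)) := by
  rw [adAct, ← mul_assoc, ← mul_assoc, Uop.proj_mul B hproj horth hp, smul_mul_assoc,
    smul_mul_assoc]

theorem mul_proj {p : Fin d → ℝ} (hp : p ∈ S) (x : Fin d → ℝ) (G : H →L[ℂ] H) :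
    adAct S E B x G * E p
      = Complex.exp (Complex.I * (B p (-x) : ℝ)) • (Uop S E B x * G * E p) := by
  rw [adAct, mul_assoc, Uop.mul_proj B hproj horth hp, mul_smul_comm]

theorem sum_proj_mul_eq_sum_mul_proj (Q : (Fin d → ℝ) →ₗ[ℝ] (Fin d → ℝ))
    (hskew : ∀ p q, B q (Q p) = - B p (Q q)) (G : H →L[ℂ] H) :
    ∑ p ∈ S, E p * adAct S E B (Q p) G = ∑ p ∈ S, adAct S E B (Q p) G * E p := by
  have hself : ∀ p, B p (Q p) = 0 := fun p => by linarith [hskew p p]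
  calc ∑ p ∈ S, E p * adAct S E B (Q p) G
      = ∑ p ∈ S, E p * G * Uop S E B (-Q p) :=
        Finset.sum_congr rfl fun p hp => by simp [proj_mul B hproj horth hp, hself]
    _ = ∑ p ∈ S, ∑ q ∈ S, Complex.exp (Complex.I * (B q (-Q p) : ℝ)) • (E p * G * E q) := by
        simp only [Uop, Finset.mul_sum, mul_smul_comm]
    _ = ∑ q ∈ S, ∑ p ∈ S, Complex.exp (Complex.I * (B p (Q q) : ℝ)) • (E p * G * E q) := by
        rw [Finset.sum_comm]
        refine Finset.sum_congr rfl fun q _ => Finset.sum_congr rfl fun p _ => ?_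
        rw [map_neg, hskew, neg_neg]
    _ = ∑ q ∈ S, Uop S E B (Q q) * G * E q := by
        simp only [Uop, Finset.sum_mul, smul_mul_assoc]
    _ = ∑ p ∈ S, adAct S E B (Q p) G * E p :=
        Finset.sum_congr rfl fun p hp => by simp [mul_proj B hproj horth hp, hself]

end adAct

theorem warp_adjoint_general {d : ℕ} {H : Type*} [NormedAddCommGroup H]
    [InnerProductSpace ℂ H] [FiniteDimensional ℂ H]
    (S : Finset (Fin d → ℝ)) (E : (Fin d → ℝ) → (H →L[ℂ] H))
    (hproj : ∀ p ∈ S, E p * E p = E p)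
    (horth : ∀ p ∈ S, ∀ q ∈ S, p ≠ q → E p * E q = 0)
    (hsa : ∀ p ∈ S, ContinuousLinearMap.adjoint (E p) = E p)
    (B : LinearMap.BilinForm ℝ (Fin d → ℝ))
    (Q : (Fin d → ℝ) →ₗ[ℝ] (Fin d → ℝ))
    (hskew : ∀ p q, B q (Q p) = - B p (Q q))
    (F : H →L[ℂ] H) :
    ContinuousLinearMap.adjoint (warp S E B Q F)
      = warp S E B Q (ContinuousLinearMap.adjoint F) := by
  have hterm : ∀ p ∈ S, ContinuousLinearMap.adjoint (E p * adAct S E B (Q p) F)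
      = adAct S E B (Q p) (ContinuousLinearMap.adjoint F) * E p := fun p hp => by
    rw [← ContinuousLinearMap.star_eq_adjoint, star_mul, ContinuousLinearMap.star_eq_adjoint,
      ContinuousLinearMap.star_eq_adjoint, ← adAct.map_adjoint B hsa, hsa p hp]
  rw [warp, warp, map_sum, Finset.sum_congr rfl hterm,
    adAct.sum_proj_mul_eq_sum_mul_proj B hproj horth Q hskew]

/-- Lemma 2.2 (finite-dimensional): the warped convolution commutes with adjoints:
`(F_Q)* = (F*)_Q`. -/
theorem warp_adjoint {d : ℕ} {H : Type*} [NormedAddCommGroup H]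
    [InnerProductSpace ℂ H] [FiniteDimensional ℂ H]
    (S : Finset (Fin d → ℝ)) (E : (Fin d → ℝ) → (H →L[ℂ] H))
    (hproj : ∀ p ∈ S, E p * E p = E p)
    (horth : ∀ p ∈ S, ∀ q ∈ S, p ≠ q → E p * E q = 0)
    (hsum : ∑ p ∈ S, E p = 1)
    (hsa : ∀ p ∈ S, ContinuousLinearMap.adjoint (E p) = E p)
    (B : LinearMap.BilinForm ℝ (Fin d → ℝ)) (hB : ∀ x y, B x y = B y x)
    (Q : (Fin d → ℝ) →ₗ[ℝ] (Fin d → ℝ))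
    (hskew : ∀ p q, B q (Q p) = - B p (Q q))
    (F : H →L[ℂ] H) :
    ContinuousLinearMap.adjoint (warp S E B Q F)
      = warp S E B Q (ContinuousLinearMap.adjoint F) :=
  warp_adjoint_general S E hproj horth hsa B Q hskew F
end

section
/- In the finite-dimensional setting, warped convolutions compose additively: (F_{Q_1})_{Q_2} = F_{Q_1 + Q_2} for any two linear maps Q_1, Q_2 on ℝ^d that are skew-symmetric with respect to the bilinear form ⟨·,·⟩. -/
open scoped ComplexConjugate

/-
Write `U = Uop S E B`. Since `E q U(x) = e^{i B(q,x)} E q`, the map `x ↦ U(x)` is a group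
homomorphism, and skewness of `Q` gives `B(q, Q q) = 0`, so `E q U(Q q) = E q`. Hence
`E q F_Q = E q F U(-Q q)` for every `q ∈ S`, i.e. `F_Q = ∑_q E q F U(-Q q)`. Applying this twice,
`(F_{Q₁})_{Q₂} = ∑_q E q F U(-Q₁ q) U(-Q₂ q) = ∑_q E q F U(-(Q₁ + Q₂) q) = F_{Q₁ + Q₂}`.
-/

section Warp

variable {d : ℕ} {H : Type*} [NormedAddCommGroup H] [InnerProductSpace ℂ H]
  {S : Finset (Fin d → ℝ)} {E : (Fin d → ℝ) → (H →L[ℂ] H)}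
  {B : LinearMap.BilinForm ℝ (Fin d → ℝ)}

lemma mul_sum_mul_of_mem (hproj : ∀ p ∈ S, E p * E p = E p)
    (horth : ∀ p ∈ S, ∀ q ∈ S, p ≠ q → E p * E q = 0)
    {q : Fin d → ℝ} (hq : q ∈ S) (g : (Fin d → ℝ) → (H →L[ℂ] H)) :
    E q * ∑ p ∈ S, E p * g p = E q * g q := by
  rw [Finset.mul_sum, Finset.sum_eq_single_of_mem q hq, ← mul_assoc, hproj q hq]
  intro p hp hne
  rw [← mul_assoc, horth q hq p hp hne.symm, zero_mul]

lemma mul_Uop_of_mem (hproj : ∀ p ∈ S, E p * E p = E p)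
    (horth : ∀ p ∈ S, ∀ q ∈ S, p ≠ q → E p * E q = 0)
    {q : Fin d → ℝ} (hq : q ∈ S) (x : Fin d → ℝ) :
    E q * Uop S E B x = Complex.exp (Complex.I * (B q x : ℝ)) • E q := by
  rw [Uop, Finset.mul_sum, Finset.sum_eq_single_of_mem q hq, mul_smul_comm, hproj q hq]
  intro p hp hne
  rw [mul_smul_comm, horth q hq p hp hne.symm, smul_zero]

lemma mul_Uop_of_apply_eq_zero (hproj : ∀ p ∈ S, E p * E p = E p)
    (horth : ∀ p ∈ S, ∀ q ∈ S, p ≠ q → E p * E q = 0)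
    {q x : Fin d → ℝ} (hq : q ∈ S) (hx : B q x = 0) :
    E q * Uop S E B x = E q := by
  rw [mul_Uop_of_mem hproj horth hq, hx, Complex.ofReal_zero, mul_zero, Complex.exp_zero,
    one_smul]

lemma Uop_mul_Uop (hproj : ∀ p ∈ S, E p * E p = E p)
    (horth : ∀ p ∈ S, ∀ q ∈ S, p ≠ q → E p * E q = 0) (x y : Fin d → ℝ) :
    Uop S E B x * Uop S E B y = Uop S E B (x + y) := by
  rw [Uop, Finset.sum_mul, Uop.eq_1 S E B (x + y)]
  refine Finset.sum_congr rfl fun p hp => ?_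
  rw [smul_mul_assoc, mul_Uop_of_mem hproj horth hp, smul_smul, ← Complex.exp_add, map_add,
    Complex.ofReal_add, mul_add]

lemma mul_warp_of_mem (hproj : ∀ p ∈ S, E p * E p = E p)
    (horth : ∀ p ∈ S, ∀ q ∈ S, p ≠ q → E p * E q = 0)
    {Q : (Fin d → ℝ) →ₗ[ℝ] (Fin d → ℝ)} (hQ : ∀ q, B q (Q q) = 0)
    {q : Fin d → ℝ} (hq : q ∈ S) (F : H →L[ℂ] H) :
    E q * warp S E B Q F = E q * F * Uop S E B (-Q q) := by
  rw [warp, mul_sum_mul_of_mem hproj horth hq, adAct, ← mul_assoc, ← mul_assoc,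
    mul_Uop_of_apply_eq_zero hproj horth hq (hQ q)]

lemma warp_eq_sum (hproj : ∀ p ∈ S, E p * E p = E p)
    (horth : ∀ p ∈ S, ∀ q ∈ S, p ≠ q → E p * E q = 0)
    {Q : (Fin d → ℝ) →ₗ[ℝ] (Fin d → ℝ)} (hQ : ∀ q, B q (Q q) = 0) (F : H →L[ℂ] H) :
    warp S E B Q F = ∑ q ∈ S, E q * F * Uop S E B (-Q q) := by
  refine Finset.sum_congr rfl fun q hq => ?_
  rw [← mul_warp_of_mem hproj horth hQ hq F, warp, mul_sum_mul_of_mem hproj horth hq]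

end Warp

lemma LinearMap.BilinForm.apply_self_eq_zero_of_skew {V : Type*} [AddCommGroup V] [Module ℝ V]
    {B : LinearMap.BilinForm ℝ V} {Q : V →ₗ[ℝ] V} (hskew : ∀ p q, B q (Q p) = -B p (Q q))
    (q : V) : B q (Q q) = 0 := by
  linarith [hskew q q]

theorem warp_warp_general {d : ℕ} {H : Type*} [NormedAddCommGroup H]
    [InnerProductSpace ℂ H]
    (S : Finset (Fin d → ℝ)) (E : (Fin d → ℝ) → (H →L[ℂ] H))
    (hproj : ∀ p ∈ S, E p * E p = E p)
    (horth : ∀ p ∈ S, ∀ q ∈ S, p ≠ q → E p * E q = 0)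
    (B : LinearMap.BilinForm ℝ (Fin d → ℝ))
    (Q₁ Q₂ : (Fin d → ℝ) →ₗ[ℝ] (Fin d → ℝ))
    (hskew₁ : ∀ p q, B q (Q₁ p) = - B p (Q₁ q))
    (hskew₂ : ∀ p q, B q (Q₂ p) = - B p (Q₂ q))
    (F : H →L[ℂ] H) :
    warp S E B Q₂ (warp S E B Q₁ F) = warp S E B (Q₁ + Q₂) F := by
  have h₁ := B.apply_self_eq_zero_of_skew hskew₁
  have h₂ := B.apply_self_eq_zero_of_skew hskew₂
  have h₁₂ : ∀ q, B q ((Q₁ + Q₂) q) = 0 := fun q => by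
    rw [LinearMap.add_apply, map_add, h₁, h₂, add_zero]
  rw [warp_eq_sum hproj horth h₂, warp_eq_sum hproj horth h₁₂]
  refine Finset.sum_congr rfl fun q hq => ?_
  rw [mul_warp_of_mem hproj horth h₁ hq, mul_assoc, Uop_mul_Uop hproj horth, LinearMap.add_apply,
    neg_add]

/-- Warped convolutions compose additively: `(F_{Q₁})_{Q₂} = F_{Q₁ + Q₂}`. -/
theorem warp_warp {d : ℕ} {H : Type*} [NormedAddCommGroup H]
    [InnerProductSpace ℂ H] [FiniteDimensional ℂ H]
    (S : Finset (Fin d → ℝ)) (E : (Fin d → ℝ) → (H →L[ℂ] H))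
    (hproj : ∀ p ∈ S, E p * E p = E p)
    (horth : ∀ p ∈ S, ∀ q ∈ S, p ≠ q → E p * E q = 0)
    (hsum : ∑ p ∈ S, E p = 1)
    (B : LinearMap.BilinForm ℝ (Fin d → ℝ)) (hB : ∀ x y, B x y = B y x)
    (Q₁ Q₂ : (Fin d → ℝ) →ₗ[ℝ] (Fin d → ℝ))
    (hskew₁ : ∀ p q, B q (Q₁ p) = - B p (Q₁ q))
    (hskew₂ : ∀ p q, B q (Q₂ p) = - B p (Q₂ q))
    (F : H →L[ℂ] H) :
    warp S E B Q₂ (warp S E B Q₁ F) = warp S E B (Q₁ + Q₂) F :=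
  warp_warp_general S E hproj horth B Q₁ Q₂ hskew₁ hskew₂ F
end

section
/- Finite-dimensional version of Lemma 2.4 (covariance): let V be a unitary operator on H and Λ an invertible linear map on ℝ^d preserving ⟨·,·⟩ such that V U(x) V^{-1} = U(Λx) for all x ∈ ℝ^d and Λ S = S. Then for any operator F on H, V F_Q V^{-1} = (V F V^{-1})_{Λ Q Λ^{-1}}. -/
open scoped ComplexConjugate

/-! Conjugating the spectral decomposition of `U` by `V` and comparing with `U(Λx)` gives
`∑_p e^{i⟨p,x⟩} (V E_p V⁻¹ - E_{Λp}) = 0` for all `x`. Distinct `p` may give the same character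
`x ↦ e^{i⟨p,x⟩}`, but distinct characters are linearly independent (Dedekind), so
`V E_p V⁻¹ - E_{Λp}` sums to zero over every set of `p` sharing the functional `⟨p,·⟩`. In
`V F_Q V⁻¹ - (V F V⁻¹)_{ΛQΛ⁻¹}` these differences are multiplied by `α_{ΛQp}(V F V⁻¹)`, which
depends on `p` only through `⟨p,·⟩` because `⟨r, ΛQp⟩ = -⟨p, QΛ⁻¹r⟩`; hence the difference
vanishes. -/

noncomputable def expChar {X : Type*} [AddCommGroup X] [Module ℝ X] (ℓ : Module.Dual ℝ X) :
    Multiplicative X →* ℂ where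
  toFun x := Complex.exp (Complex.I * (ℓ x.toAdd : ℝ))
  map_one' := by simp
  map_mul' x y := by simp [mul_add, Complex.exp_add]

theorem expChar_injective {X : Type*} [AddCommGroup X] [Module ℝ X] :
    Function.Injective (expChar (X := X)) := by
  intro ℓ ℓ' h
  ext x
  by_contra hne
  set t := Real.pi / (ℓ x - ℓ' x)
  have hπ : t * ℓ x = t * ℓ' x + Real.pi := by
    rw [← sub_eq_iff_eq_add', ← mul_sub]
    exact div_mul_cancel₀ _ (sub_ne_zero.mpr hne)
  -- at `t • x` the two characters differ by the factor `exp (i π) = -1`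
  have key := DFunLike.congr_fun h (Multiplicative.ofAdd (t • x))
  simp only [expChar, MonoidHom.coe_mk, OneHom.coe_mk, toAdd_ofAdd, map_smul, smul_eq_mul] at key
  rw [hπ, Complex.ofReal_add, mul_add, Complex.exp_add, mul_comm Complex.I (Real.pi : ℂ),
    Complex.exp_pi_mul_I, mul_neg_one, CharZero.neg_eq_self_iff] at key
  exact Complex.exp_ne_zero _ key

theorem linearIndependent_expChar {X : Type*} [AddCommGroup X] [Module ℝ X] :
    LinearIndependent ℂ (fun ℓ : Module.Dual ℝ X => ⇑(expChar ℓ)) :=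
  (linearIndependent_monoidHom _ ℂ).comp expChar expChar_injective

theorem LinearIndependent.eq_zero_of_forall_sum_smul_eq_zero {ι X K M : Type*} [Field K]
    [AddCommGroup M] [Module K M] {f : ι → X → K} (hf : LinearIndependent K f) {s : Finset ι}
    {a : ι → M} (h : ∀ x, ∑ i ∈ s, f i x • a i = 0) : ∀ i ∈ s, a i = 0 := by
  intro i hi
  refine (Module.forall_dual_apply_eq_zero_iff K (a i)).mp fun φ => ?_
  refine linearIndependent_iff'.mp hf s (fun j => φ (a j)) ?_ i hi
  ext x
  simpa [Finset.sum_apply, mul_comm] using congrArg φ (h x)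

theorem LinearIndependent.sum_fiber_eq_zero {ι κ X K M : Type*} [Field K] [AddCommGroup M]
    [Module K M] [DecidableEq κ] {f : κ → X → K} (hf : LinearIndependent K f) {s : Finset ι}
    {g : ι → κ} {a : ι → M} (h : ∀ x, ∑ i ∈ s, f (g i) x • a i = 0) (k : κ) :
    ∑ i ∈ s with g i = k, a i = 0 := by
  by_cases hk : k ∈ s.image g
  · refine hf.eq_zero_of_forall_sum_smul_eq_zero (a := fun k => ∑ i ∈ s with g i = k, a i)
      (fun x => ?_) k hk
    rw [← h x, ← Finset.sum_fiberwise_of_maps_to fun i hi => Finset.mem_image_of_mem g hi]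
    refine Finset.sum_congr rfl fun k _ => ?_
    rw [Finset.smul_sum]
    exact Finset.sum_congr rfl fun i hi => by rw [(Finset.mem_filter.mp hi).2]
  · refine Finset.sum_eq_zero fun i hi => absurd ?_ hk
    obtain ⟨his, rfl⟩ := Finset.mem_filter.mp hi
    exact Finset.mem_image_of_mem g his

theorem Finset.sum_mul_eq_zero_of_sum_fiber_eq_zero {ι κ R : Type*} [DecidableEq κ]
    [NonUnitalNonAssocSemiring R] {s : Finset ι} {g : ι → κ} {A W : ι → R}
    (hA : ∀ k, ∑ i ∈ s with g i = k, A i = 0) (hW : ∀ i ∈ s, ∀ j ∈ s, g i = g j → W i = W j) :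
    ∑ i ∈ s, A i * W i = 0 := by
  rw [← Finset.sum_fiberwise_of_maps_to fun i hi => Finset.mem_image_of_mem g hi]
  refine Finset.sum_eq_zero fun k hk => ?_
  obtain ⟨j, hj, rfl⟩ := Finset.mem_image.mp hk
  rw [Finset.sum_congr rfl fun i hi => by
      rw [hW i (Finset.mem_filter.mp hi).1 j hj (Finset.mem_filter.mp hi).2],
    ← Finset.sum_mul, hA, zero_mul]

theorem Finset.sum_comp_of_image_eq {α M : Type*} [DecidableEq α] [AddCommMonoid M]
    {s : Finset α} {g : α → α} (hg : Set.InjOn g s) (hs : s.image g = s) (f : α → M) :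
    ∑ x ∈ s, f (g x) = ∑ x ∈ s, f x := by
  rw [← Finset.sum_image hg, hs]

section WarpedConvolution

variable {d : ℕ} {H : Type*} [NormedAddCommGroup H] [InnerProductSpace ℂ H]
  (S : Finset (Fin d → ℝ)) (E : (Fin d → ℝ) → (H →L[ℂ] H)) (B : LinearMap.BilinForm ℝ (Fin d → ℝ))

theorem Uop_congr {y y' : Fin d → ℝ} (h : ∀ r ∈ S, B r y = B r y') :
    Uop S E B y = Uop S E B y' :=
  Finset.sum_congr rfl fun r hr => by rw [h r hr]

theorem adAct_congr {y y' : Fin d → ℝ} (h : ∀ r ∈ S, B r y = B r y') (F : H →L[ℂ] H) :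
    adAct S E B y F = adAct S E B y' F := by
  have h_neg : ∀ r ∈ S, B r (-y) = B r (-y') := fun r hr => by simp only [map_neg, h r hr]
  rw [adAct, adAct, Uop_congr S E B h, Uop_congr S E B h_neg]

theorem Uop_map_eq_sum [DecidableEq (Fin d → ℝ)] {Λ : (Fin d → ℝ) ≃ₗ[ℝ] (Fin d → ℝ)}
    (hΛB : ∀ x y, B (Λ x) (Λ y) = B x y) (hΛS : S.image (fun p => Λ p) = S) (x : Fin d → ℝ) :
    Uop S E B (Λ x) = ∑ q ∈ S, Complex.exp (Complex.I * (B q x : ℝ)) • E (Λ q) := by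
  rw [Uop, ← Finset.sum_comp_of_image_eq Λ.injective.injOn hΛS]
  simp only [hΛB]

theorem conj_adAct {V W : H →L[ℂ] H} (hWV : W * V = 1) {Λ : (Fin d → ℝ) →ₗ[ℝ] (Fin d → ℝ)}
    (hcov : ∀ x, V * Uop S E B x * W = Uop S E B (Λ x)) (x : Fin d → ℝ) (F : H →L[ℂ] H) :
    V * adAct S E B x F * W = adAct S E B (Λ x) (V * F * W) := by
  have hcancel : ∀ T : H →L[ℂ] H, W * (V * T) = T := fun T => by rw [← mul_assoc, hWV, one_mul]
  rw [adAct, adAct, ← hcov, ← map_neg, ← hcov]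
  simp only [mul_assoc, hcancel]

theorem conj_warp {V W : H →L[ℂ] H} (hWV : W * V = 1) {Λ : (Fin d → ℝ) →ₗ[ℝ] (Fin d → ℝ)}
    (hcov : ∀ x, V * Uop S E B x * W = Uop S E B (Λ x)) (Q : (Fin d → ℝ) →ₗ[ℝ] (Fin d → ℝ))
    (F : H →L[ℂ] H) :
    V * warp S E B Q F * W = ∑ q ∈ S, (V * E q * W) * adAct S E B (Λ (Q q)) (V * F * W) := by
  rw [warp, Finset.mul_sum, Finset.sum_mul]
  refine Finset.sum_congr rfl fun q _ => ?_
  rw [← conj_adAct S E B hWV hcov]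
  simp only [mul_assoc, ← mul_assoc W V, hWV, one_mul]

theorem warp_conj_linearEquiv [DecidableEq (Fin d → ℝ)] {Λ : (Fin d → ℝ) ≃ₗ[ℝ] (Fin d → ℝ)}
    (hΛS : S.image (fun p => Λ p) = S) (Q : (Fin d → ℝ) →ₗ[ℝ] (Fin d → ℝ)) (F : H →L[ℂ] H) :
    warp S E B (Λ.toLinearMap ∘ₗ Q ∘ₗ Λ.symm.toLinearMap) F
      = ∑ q ∈ S, E (Λ q) * adAct S E B (Λ (Q q)) F := by
  rw [warp, ← Finset.sum_comp_of_image_eq Λ.injective.injOn hΛS]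
  simp only [LinearMap.comp_apply, LinearEquiv.coe_coe, LinearEquiv.symm_apply_apply]

end WarpedConvolution

theorem warp_covariance_general {d : ℕ} {H : Type*} [NormedAddCommGroup H]
    [InnerProductSpace ℂ H] [FiniteDimensional ℂ H]
    (S : Finset (Fin d → ℝ)) (E : (Fin d → ℝ) → (H →L[ℂ] H))
    (B : LinearMap.BilinForm ℝ (Fin d → ℝ))
    (Q : (Fin d → ℝ) →ₗ[ℝ] (Fin d → ℝ))
    (hskew : ∀ p q, B q (Q p) = - B p (Q q))
    (Λ : (Fin d → ℝ) ≃ₗ[ℝ] (Fin d → ℝ))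
    (hΛB : ∀ x y, B (Λ x) (Λ y) = B x y)
    (hΛS : S.image (fun p => Λ p) = S)
    (V : H →L[ℂ] H)
    (hV₁ : ContinuousLinearMap.adjoint V * V = 1)
    (hcov : ∀ x, V * Uop S E B x * ContinuousLinearMap.adjoint V = Uop S E B (Λ x))
    (F : H →L[ℂ] H) :
    V * warp S E B Q F * ContinuousLinearMap.adjoint V
      = warp S E B (Λ.toLinearMap ∘ₗ Q ∘ₗ Λ.symm.toLinearMap)
          (V * F * ContinuousLinearMap.adjoint V) := by
  set W := ContinuousLinearMap.adjoint V
  set G := V * F * W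
  have hchar : ∀ x, ∑ q ∈ S,
      Complex.exp (Complex.I * (B q x : ℝ)) • (V * E q * W - E (Λ q)) = 0 := fun x => by
    simp only [smul_sub, Finset.sum_sub_distrib]
    rw [sub_eq_zero, ← Uop_map_eq_sum S E B hΛB hΛS, ← hcov, Uop, Finset.mul_sum, Finset.sum_mul]
    simp only [mul_smul_comm, smul_mul_assoc]
  have hconst : ∀ q ∈ S, ∀ q' ∈ S, B q = B q' →
      adAct S E B (Λ (Q q)) G = adAct S E B (Λ (Q q')) G := fun q _ q' _ h =>
    adAct_congr S E B (fun r _ => by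
      rw [← Λ.apply_symm_apply r, hΛB, hΛB, hskew q, hskew q', h]) G
  calc V * warp S E B Q F * W
      = ∑ q ∈ S, (V * E q * W) * adAct S E B (Λ (Q q)) G := conj_warp S E B hV₁ hcov Q F
    _ = ∑ q ∈ S, E (Λ q) * adAct S E B (Λ (Q q)) G := by
      classical
      rw [← sub_eq_zero, ← Finset.sum_sub_distrib]
      simp only [← sub_mul]
      exact Finset.sum_mul_eq_zero_of_sum_fiber_eq_zero
        (linearIndependent_expChar.sum_fiber_eq_zero fun x => hchar x.toAdd) hconst
    _ = warp S E B (Λ.toLinearMap ∘ₗ Q ∘ₗ Λ.symm.toLinearMap) G :=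
      (warp_conj_linearEquiv S E B hΛS Q G).symm

/-- Lemma 2.4 (finite-dimensional covariance): if `V` is unitary, `Λ` preserves the
bilinear form with `Λ S = S` and `V U(x) V⁻¹ = U(Λ x)`, then
`V F_Q V⁻¹ = (V F V⁻¹)_{Λ Q Λ⁻¹}`. -/
theorem warp_covariance {d : ℕ} {H : Type*} [NormedAddCommGroup H]
    [InnerProductSpace ℂ H] [FiniteDimensional ℂ H]
    (S : Finset (Fin d → ℝ)) (E : (Fin d → ℝ) → (H →L[ℂ] H))
    (hproj : ∀ p ∈ S, E p * E p = E p)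
    (horth : ∀ p ∈ S, ∀ q ∈ S, p ≠ q → E p * E q = 0)
    (hsum : ∑ p ∈ S, E p = 1)
    (B : LinearMap.BilinForm ℝ (Fin d → ℝ)) (hB : ∀ x y, B x y = B y x)
    (Q : (Fin d → ℝ) →ₗ[ℝ] (Fin d → ℝ))
    (hskew : ∀ p q, B q (Q p) = - B p (Q q))
    (Λ : (Fin d → ℝ) ≃ₗ[ℝ] (Fin d → ℝ))
    (hΛB : ∀ x y, B (Λ x) (Λ y) = B x y)
    (hΛS : S.image (fun p => Λ p) = S)
    (V : H →L[ℂ] H)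
    (hV₁ : ContinuousLinearMap.adjoint V * V = 1)
    (hV₂ : V * ContinuousLinearMap.adjoint V = 1)
    (hcov : ∀ x, V * Uop S E B x * ContinuousLinearMap.adjoint V = Uop S E B (Λ x))
    (F : H →L[ℂ] H) :
    V * warp S E B Q F * ContinuousLinearMap.adjoint V
      = warp S E B (Λ.toLinearMap ∘ₗ Q ∘ₗ Λ.symm.toLinearMap)
          (V * F * ContinuousLinearMap.adjoint V) :=
  warp_covariance_general S E B Q hskew Λ hΛB hΛS V hV₁ hcov F
end
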